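/- arXiv:math/0509560 — 6 statements merged into one kernel-verified Lean document; each statement's English description precedes it below -/
import Mathlib

section
/- Let F be a finite field of odd prime order, W a finite-dimensional vector space over F, and φ : W → ℝ/ℤ a quadratic phase function (i.e., φ(x+h) = φ(x) + ∇φ(x)·h + (1/2)∇²φ h·h for a self-adjoint linear map ∇²φ). If the kernel of ∇²φ has codimension r in W (i.e., φ has rank r), then |𝔼_{x∈W} e(φ(x))| ≤ |F|^{-r/2}. -/
/-!
Weyl differencing: `|∑ₓ e(φ x)|² = ∑ₕ ∑ᵧ e(φ(y + h) - φ y)`, and for a quadratic phase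
`φ(y + h) - φ y = φ h - φ 0 + ∇²φ(h, y)` with `∇²φ(h, ·)` additive. The inner sum over `y` is
then a character sum, equal to `|W|` if `h ∈ ker ∇²φ` and to `0` otherwise, so
`|∑ₓ e(φ x)|² ≤ |ker ∇²φ| · |W| = |W|² / p ^ r`.
-/

open Finset ComplexConjugate

namespace AddCircle

variable {T : ℝ}

/-- `a ↦ e(a / T)`, the standard character of `ℝ / Tℤ`. -/
noncomputable def expChar : AddChar (AddCircle T) ℂ :=
  Circle.coeHom.compAddChar toCircle_addChar

lemma expChar_apply (a : AddCircle T) : expChar a = (toCircle a : ℂ) := rfl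

lemma norm_expChar (a : AddCircle T) : ‖expChar a‖ = 1 := Circle.norm_coe _

lemma conj_expChar (a : AddCircle T) : conj (expChar a) = expChar (-a) := by
  rw [expChar_apply, expChar_apply, toCircle_neg, Circle.coe_inv_eq_conj]

lemma expChar_injective (hT : T ≠ 0) : Function.Injective (expChar : AddCircle T → ℂ) :=
  Subtype.val_injective.comp (injective_toCircle hT)

variable {W : Type*} [AddCommGroup W] [Fintype W]

lemma sum_expChar_mul_conj (f : W → AddCircle T) :
    (∑ x, expChar (f x)) * conj (∑ x, expChar (f x)) =
      ∑ h, ∑ y, expChar (f (y + h) - f y) := by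
  rw [map_sum, sum_mul_sum, sum_comm]
  conv_rhs => rw [sum_comm]
  refine sum_congr rfl fun y _ ↦ Fintype.sum_equiv (Equiv.subRight y) _ _ fun x ↦ ?_
  simp [conj_expChar, ← AddChar.map_add_eq_mul, sub_eq_add_neg]

lemma norm_sum_expChar_hom (hT : T ≠ 0) (ψ : W →+ AddCircle T) [Decidable (ψ = 0)] :
    ‖∑ y, expChar (ψ y)‖ = if ψ = 0 then (Fintype.card W : ℝ) else 0 := by
  have hchar : expChar.compAddMonoidHom ψ = 0 ↔ ψ = 0 := by
    simp only [DFunLike.ext_iff, AddChar.compAddMonoidHom_apply, AddMonoidHom.zero_apply]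
    exact forall_congr' fun y ↦ (expChar_injective hT).eq_iff' (AddChar.map_zero_eq_one _)
  have hsum := AddChar.sum_eq_ite (expChar.compAddMonoidHom ψ)
  simp only [AddChar.compAddMonoidHom_apply, hchar] at hsum
  split_ifs at hsum ⊢ <;> simp [hsum]

end AddCircle

section QuadraticPhase

variable {W A : Type*} [AddCommGroup W] [AddCommGroup A]

def IsQuadraticPhase (φ : W → A) : Prop :=
  ∀ x h₁ h₂ h₃ : W,
    φ (x + h₁ + h₂ + h₃) - φ (x + h₁ + h₂) - φ (x + h₂ + h₃) - φ (x + h₁ + h₃)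
      + φ (x + h₁) + φ (x + h₂) + φ (x + h₃) - φ x = 0

/-- The polarization `∇²φ(h, k)` of `φ`. -/
def secondDiff (φ : W → A) (h k : W) : A := φ (h + k) - φ h - φ k + φ 0

def secondDiffKer (φ : W → A) : Set W := {h | ∀ k, secondDiff φ h k = 0}

lemma sub_eq_secondDiff (φ : W → A) (y h : W) :
    φ (y + h) - φ y = φ h - φ 0 + secondDiff φ h y := by
  rw [secondDiff, add_comm y h]
  abel

namespace IsQuadraticPhase

variable {φ : W → A}

lemma secondDiff_eq (hφ : IsQuadraticPhase φ) (x h k : W) :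
    φ (x + h + k) - φ (x + h) - φ (x + k) + φ x = secondDiff φ h k := by
  have h3 := hφ 0 h k x
  simp only [zero_add] at h3
  rw [← sub_eq_zero, ← h3, secondDiff, add_comm x h, add_comm x k, add_right_comm h x k]
  abel

lemma secondDiff_add_right (hφ : IsQuadraticPhase φ) (h k₁ k₂ : W) :
    secondDiff φ h (k₁ + k₂) = secondDiff φ h k₁ + secondDiff φ h k₂ := by
  have h3 := hφ 0 h k₁ k₂
  simp only [zero_add] at h3
  rw [← sub_eq_zero, ← h3, secondDiff, secondDiff, secondDiff, ← add_assoc]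
  abel

def secondDiffHom (hφ : IsQuadraticPhase φ) (h : W) : W →+ A :=
  AddMonoidHom.mk' (secondDiff φ h) (hφ.secondDiff_add_right h)

lemma secondDiffHom_eq_zero_iff (hφ : IsQuadraticPhase φ) (h : W) :
    hφ.secondDiffHom h = 0 ↔ h ∈ secondDiffKer φ :=
  DFunLike.ext_iff

lemma mem_secondDiffKer_iff (hφ : IsQuadraticPhase φ) (h : W) :
    h ∈ secondDiffKer φ ↔ ∀ x k, φ (x + h + k) - φ (x + h) - φ (x + k) + φ x = 0 := by
  simp only [hφ.secondDiff_eq]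
  exact ⟨fun hh _ ↦ hh, fun hh ↦ hh 0⟩

open AddCircle in
lemma norm_sum_expChar_sq_le [Fintype W] {T : ℝ} (hT : T ≠ 0) {φ : W → AddCircle T}
    (hφ : IsQuadraticPhase φ) :
    ‖∑ x, expChar (φ x)‖ ^ 2 ≤ Nat.card (secondDiffKer φ) * Fintype.card W := by
  classical
  have hinner (h : W) :
      ‖∑ y, expChar (φ (y + h) - φ y)‖ = ‖∑ y, expChar (hφ.secondDiffHom h y)‖ := by
    simp only [sub_eq_secondDiff φ _ h, AddChar.map_add_eq_mul, ← mul_sum, norm_mul,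
      norm_expChar, one_mul]
    rfl
  calc ‖∑ x, expChar (φ x)‖ ^ 2
      = ‖∑ h, ∑ y, expChar (φ (y + h) - φ y)‖ := by
        rw [← sum_expChar_mul_conj, norm_mul, RCLike.norm_conj, sq]
    _ ≤ ∑ h, ‖∑ y, expChar (φ (y + h) - φ y)‖ := norm_sum_le _ _
    _ = ∑ h, if h ∈ secondDiffKer φ then (Fintype.card W : ℝ) else 0 := by
        simp only [hinner, norm_sum_expChar_hom hT, hφ.secondDiffHom_eq_zero_iff]
    _ = Nat.card (secondDiffKer φ) * Fintype.card W := by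
        simp [sum_ite]

end IsQuadraticPhase

end QuadraticPhase

lemma Real.rpow_neg_natCast_div_two_sq {x : ℝ} (hx : 0 ≤ x) (r : ℕ) :
    (x ^ (-(r : ℝ) / 2)) ^ 2 = (x ^ r)⁻¹ := by
  rw [← Real.rpow_mul_natCast hx, Nat.cast_ofNat, div_mul_cancel₀ _ two_ne_zero,
    Real.rpow_neg hx, Real.rpow_natCast]

theorem gauss_sum_bound_general {p : ℕ}
    (W : Type*) [AddCommGroup W] [Fintype W]
    (φ : W → AddCircle (1 : ℝ))
    (hquad : ∀ x h₁ h₂ h₃ : W,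
      φ (x + h₁ + h₂ + h₃) - φ (x + h₁ + h₂) - φ (x + h₂ + h₃) - φ (x + h₁ + h₃)
        + φ (x + h₁) + φ (x + h₂) + φ (x + h₃) - φ x = 0)
    (r : ℕ)
    (hrank : Nat.card {h : W // ∀ x k : W,
        φ (x + h + k) - φ (x + h) - φ (x + k) + φ x = 0} * p ^ r
      = Fintype.card W) :
    ‖(∑ x : W, (AddCircle.toCircle (φ x) : ℂ)) / (Fintype.card W : ℂ)‖
      ≤ (p : ℝ) ^ (-(r : ℝ) / 2) := by
  have hφ : IsQuadraticPhase φ := hquad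
  have hker : Nat.card (secondDiffKer φ) * p ^ r = Fintype.card W := by
    rw [← hrank, Nat.card_congr (Equiv.subtypeEquivRight hφ.mem_secondDiffKer_iff)]
  have hN : (Fintype.card W : ℝ) ≠ 0 := by positivity
  have hK : (Nat.card (secondDiffKer φ) : ℝ) * p ^ r = Fintype.card W := by exact_mod_cast hker
  have hK0 : (Nat.card (secondDiffKer φ) : ℝ) ≠ 0 := left_ne_zero_of_mul (hK ▸ hN)
  rw [← pow_le_pow_iff_left₀ (norm_nonneg _) (by positivity) two_ne_zero,
    Real.rpow_neg_natCast_div_two_sq (Nat.cast_nonneg p)]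
  calc ‖(∑ x, AddCircle.expChar (φ x)) / (Fintype.card W : ℂ)‖ ^ 2
      = ‖∑ x, AddCircle.expChar (φ x)‖ ^ 2 / (Fintype.card W : ℝ) ^ 2 := by
        rw [norm_div, div_pow, Complex.norm_natCast]
    _ ≤ Nat.card (secondDiffKer φ) * Fintype.card W / (Fintype.card W : ℝ) ^ 2 := by
        gcongr
        exact hφ.norm_sum_expChar_sq_le one_ne_zero
    _ = ((p : ℝ) ^ r)⁻¹ := by
        rw [sq, mul_div_mul_right _ _ hN, ← hK, div_mul_cancel_left₀ hK0]

/-- Gauss sum bound for quadratic phase functions of rank `r`. -/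
theorem gauss_sum_bound {p : ℕ} (hp : p.Prime) (hodd : Odd p)
    (W : Type*) [AddCommGroup W] [Module (ZMod p) W] [Fintype W]
    (φ : W → AddCircle (1 : ℝ))
    (hquad : ∀ x h₁ h₂ h₃ : W,
      φ (x + h₁ + h₂ + h₃) - φ (x + h₁ + h₂) - φ (x + h₂ + h₃) - φ (x + h₁ + h₃)
        + φ (x + h₁) + φ (x + h₂) + φ (x + h₃) - φ x = 0)
    (r : ℕ)
    (hrank : Nat.card {h : W // ∀ x k : W,
        φ (x + h + k) - φ (x + h) - φ (x + k) + φ x = 0} * p ^ r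
      = Fintype.card W) :
    ‖(∑ x : W, (AddCircle.toCircle (φ x) : ℂ)) / (Fintype.card W : ℂ)‖
      ≤ (p : ℝ) ^ (-(r : ℝ) / 2) :=
  gauss_sum_bound_general W φ hquad r hrank
end

section
/- Let G be a finite-dimensional vector space over a finite field F of odd prime order, and let M₁,…,M_d : G → G* be self-adjoint linear maps into the dual space (i.e., Mⱼx·y = Mⱼy·x for all x,y). Then there exists a linear subspace W of G with dim(W) ≥ (1/(d+1))·dim(G) − 2d/(d+1) such that Mⱼ x · y = 0 for all 1 ≤ j ≤ d and all x, y ∈ W. -/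
open scoped BigOperators
open Module MvPolynomial

universe u

section aux
variable {p : ℕ} [Fact p.Prime]

/-- Chevalley–Warning: common nonzero isotropic vector. -/
lemma exists_isotropic {G : Type*} [AddCommGroup G] [Module (ZMod p) G]
    [FiniteDimensional (ZMod p) G]
    {d : ℕ} (M : Fin d → G →ₗ[ZMod p] Module.Dual (ZMod p) G)
    (hn : 2 * d < Module.finrank (ZMod p) G) :
    ∃ x : G, x ≠ 0 ∧ ∀ j, M j x x = 0 := by
  classical
  set n := Module.finrank (ZMod p) G with hn'
  let b : Basis (Fin n) (ZMod p) G := Module.finBasis (ZMod p) G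
  let P : Fin d → MvPolynomial (Fin n) (ZMod p) := fun j =>
    ∑ k : Fin n, ∑ l : Fin n, MvPolynomial.C (M j (b l) (b k)) * (X k * X l)
  have heval : ∀ (v : Fin n → ZMod p) j,
      MvPolynomial.eval v (P j) = M j (b.equivFun.symm v) (b.equivFun.symm v) := by
    intro v j
    have hx : b.equivFun.symm v = ∑ k : Fin n, v k • b k := by
      rw [Basis.equivFun_symm_apply]
    rw [hx]
    simp only [P, map_sum, map_smul, LinearMap.sum_apply, LinearMap.smul_apply]
    simp only [MvPolynomial.eval_sum, map_mul, eval_C, eval_X, smul_eq_mul, Finset.mul_sum]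
    exact Finset.sum_congr rfl fun k _ => Finset.sum_congr rfl fun l _ => by ring
  have hdeg : ∑ j, (P j).totalDegree < Fintype.card (Fin n) := by
    have h1 : ∀ j, (P j).totalDegree ≤ 2 := by
      intro j
      refine (totalDegree_finset_sum _ _).trans ?_
      refine Finset.sup_le fun k _ => ?_
      refine (totalDegree_finset_sum _ _).trans ?_
      refine Finset.sup_le fun l _ => ?_
      calc (MvPolynomial.C (M j (b l) (b k)) * (X k * X l)).totalDegree
          ≤ (MvPolynomial.C (M j (b l) (b k)) : MvPolynomial (Fin n) (ZMod p)).totalDegree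
            + (X k * X l : MvPolynomial (Fin n) (ZMod p)).totalDegree := totalDegree_mul _ _
        _ ≤ 0 + ((X k : MvPolynomial (Fin n) (ZMod p)).totalDegree
            + (X l : MvPolynomial (Fin n) (ZMod p)).totalDegree) :=
            add_le_add (le_of_eq (totalDegree_C _)) (totalDegree_mul _ _)
        _ ≤ 2 := by simp [totalDegree_X]
    calc ∑ j, (P j).totalDegree ≤ ∑ _j : Fin d, 2 := Finset.sum_le_sum fun j _ => h1 j
      _ = 2 * d := by simp [mul_comm]
      _ < Fintype.card (Fin n) := by simpa using hn
  have hdvd := char_dvd_card_solutions_of_fintype_sum_lt p hdeg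
  have hz0 : ∀ i, MvPolynomial.eval (0 : Fin n → ZMod p) (P i) = 0 := by
    intro i; rw [heval]; simp
  have hdvd' : p ∣ Fintype.card { x : Fin n → ZMod p // ∀ i, MvPolynomial.eval x (P i) = 0 } := by
    convert hdvd using 2 <;> exact Subsingleton.elim _ _
  have hpos : 0 < Fintype.card { x : Fin n → ZMod p // ∀ i, MvPolynomial.eval x (P i) = 0 } :=
    Fintype.card_pos_iff.mpr ⟨⟨0, hz0⟩⟩
  have hcard : 2 ≤ Fintype.card { x : Fin n → ZMod p // ∀ i, MvPolynomial.eval x (P i) = 0 } :=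
    ((Fact.out : p.Prime).two_le).trans (Nat.le_of_dvd hpos hdvd')
  obtain ⟨w, hw⟩ := Fintype.exists_ne_of_one_lt_card (by omega)
      (⟨0, hz0⟩ : { x : Fin n → ZMod p // ∀ i, MvPolynomial.eval x (P i) = 0 })
  refine ⟨b.equivFun.symm w.1, ?_, fun j => by rw [← heval]; exact w.2 j⟩
  intro h0
  apply hw
  have hw0 : w.1 = 0 := b.equivFun.symm.injective (by rw [h0, map_zero])
  exact Subtype.ext hw0

/-- Main induction: integer version. -/
lemma aux_main (d : ℕ) : ∀ n : ℕ, ∀ (G : Type u) (_ : AddCommGroup G)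
    (_ : Module (ZMod p) G) (_ : FiniteDimensional (ZMod p) G),
    Module.finrank (ZMod p) G = n →
    ∀ (M : Fin d → G →ₗ[ZMod p] Module.Dual (ZMod p) G),
    (∀ j (x y : G), M j x y = M j y x) →
    ∃ W : Submodule (ZMod p) G,
      Module.finrank (ZMod p) G ≤ (d + 1) * Module.finrank (ZMod p) W + 2 * d ∧
      ∀ j, ∀ x ∈ W, ∀ y ∈ W, M j x y = 0 := by
  intro n
  induction n using Nat.strong_induction_on with
  | _ n ih =>
    intro G _ _ _ hrank M hself
    by_cases hle : n ≤ 2 * d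
    · refine ⟨⊥, ?_, by simp⟩
      have hb : Module.finrank (ZMod p) (⊥ : Submodule (ZMod p) G) = 0 := finrank_bot _ _
      omega
    push_neg at hle
    obtain ⟨x, hx0, hxx⟩ := exists_isotropic M (by omega)
    -- the subspace orthogonal to x
    let Φ : G →ₗ[ZMod p] (Fin d → ZMod p) := LinearMap.pi (fun j => M j x)
    set U := LinearMap.ker Φ with hU
    have hmemU : ∀ y, y ∈ U ↔ ∀ j, M j x y = 0 := by
      intro y
      constructor
      · intro hy j
        have : Φ y = 0 := hy
        exact congrFun this j
      · intro hy
        show Φ y = 0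
        funext j; exact hy j
    have hxU : x ∈ U := (hmemU x).mpr hxx
    have hUrank : n ≤ Module.finrank (ZMod p) U + d := by
      have h1 := LinearMap.finrank_range_add_finrank_ker Φ
      rw [← hU, hrank] at h1
      have h2 : Module.finrank (ZMod p) (LinearMap.range Φ) ≤ d := by
        have := Submodule.finrank_le (LinearMap.range Φ)
        rwa [Module.finrank_fin_fun] at this
      omega
    -- complement of span x inside U
    set xU : U := ⟨x, hxU⟩ with hxUdef
    have hxU0 : xU ≠ 0 := fun h => hx0 (congrArg Subtype.val h)
    obtain ⟨C, hC⟩ := Submodule.exists_isCompl (ZMod p ∙ xU)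
    have hrankU : 1 + Module.finrank (ZMod p) C = Module.finrank (ZMod p) U := by
      have := Submodule.finrank_add_eq_of_isCompl hC
      rwa [finrank_span_singleton hxU0] at this
    -- restrict the forms to C
    let ι : C →ₗ[ZMod p] G := U.subtype.comp C.subtype
    have hιinj : Function.Injective ι :=
      (Submodule.injective_subtype U).comp (Submodule.injective_subtype C)
    have hιU : ∀ c : C, ι c ∈ U := fun c => (c : U).2
    let N : Fin d → C →ₗ[ZMod p] Module.Dual (ZMod p) C :=
      fun j => (M j).compl₁₂ ι ι
    have hNself : ∀ j (a b : C), N j a b = N j b a := fun j a b => hself j (ι a) (ι b)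
    have hClt : Module.finrank (ZMod p) C < n := by
      have := Submodule.finrank_le U
      omega
    obtain ⟨W', hW'rank, hW'iso⟩ :=
      ih _ hClt C inferInstance inferInstance inferInstance rfl N hNself
    set A := W'.map ι with hA
    have hArank : Module.finrank (ZMod p) A = Module.finrank (ZMod p) W' :=
      (LinearEquiv.finrank_eq (Submodule.equivMapOfInjective ι hιinj W')).symm
    have hxA : x ∉ A := by
      rintro ⟨c, hc, hcx⟩
      have hcU : (c : U) = xU := Subtype.ext hcx
      have hmem : xU ∈ (ZMod p ∙ xU) ⊓ C :=
        ⟨Submodule.mem_span_singleton_self xU, hcU ▸ c.2⟩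
      rw [hC.inf_eq_bot] at hmem
      exact hxU0 hmem
    have hAU : ∀ a ∈ A, a ∈ U := by rintro a ⟨c, _, rfl⟩; exact hιU c
    refine ⟨A ⊔ (ZMod p ∙ x), ?_, ?_⟩
    · -- dimension count
      have hdisj : Disjoint A (ZMod p ∙ x) :=
        (Submodule.disjoint_span_singleton' hx0).mpr hxA
      have hsum := Submodule.finrank_sup_add_finrank_inf_eq A (ZMod p ∙ x)
      rw [hdisj.eq_bot] at hsum
      have hb : Module.finrank (ZMod p) (⊥ : Submodule (ZMod p) G) = 0 := finrank_bot _ _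
      rw [hb, finrank_span_singleton hx0] at hsum
      have hmul : (d + 1) * Module.finrank (ZMod p) (A ⊔ (ZMod p ∙ x) : Submodule (ZMod p) G)
          = (d + 1) * Module.finrank (ZMod p) W' + (d + 1) := by
        have hfr : Module.finrank (ZMod p) (A ⊔ (ZMod p ∙ x) : Submodule (ZMod p) G)
            = Module.finrank (ZMod p) W' + 1 := by omega
        rw [hfr]; ring
      omega
    · intro j a ha b hb
      rw [Submodule.mem_sup] at ha hb
      obtain ⟨ya, hya, za, hza, rfl⟩ := ha
      obtain ⟨yb, hyb, zb, hzb, rfl⟩ := hb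
      rw [Submodule.mem_span_singleton] at hza hzb
      obtain ⟨ca, rfl⟩ := hza
      obtain ⟨cb, rfl⟩ := hzb
      obtain ⟨wa, hwa, rfl⟩ := hya
      obtain ⟨wb, hwb, rfl⟩ := hyb
      have h1 : M j (ι wa) (ι wb) = 0 := hW'iso j wa hwa wb hwb
      have h2 : M j x (ι wb) = 0 := (hmemU _).mp (hιU wb) j
      have h3 : M j (ι wa) x = 0 := by rw [hself]; exact (hmemU _).mp (hιU wa) j
      simp [map_add, map_smul, h1, h2, h3, hxx j, smul_eq_mul]
end aux

open scoped BigOperators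

/-- Quadratic forms have large common null spaces. -/
theorem quadratic_forms_large_null_space {p : ℕ} [Fact p.Prime] (hodd : Odd p)
    (G : Type*) [AddCommGroup G] [Module (ZMod p) G] [FiniteDimensional (ZMod p) G]
    (d : ℕ) (M : Fin d → G →ₗ[ZMod p] Module.Dual (ZMod p) G)
    (hself : ∀ j (x y : G), M j x y = M j y x) :
    ∃ W : Submodule (ZMod p) G,
      (Module.finrank (ZMod p) G : ℝ) / (d + 1) - 2 * d / (d + 1)
          ≤ (Module.finrank (ZMod p) W : ℝ) ∧
      ∀ j, ∀ x ∈ W, ∀ y ∈ W, M j x y = 0 := by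
  obtain ⟨W, hrank, hiso⟩ :=
    aux_main d (Module.finrank (ZMod p) G) G inferInstance inferInstance inferInstance rfl M hself
  refine ⟨W, ?_, hiso⟩
  have hd : (0 : ℝ) < d + 1 := by positivity
  have hcast : (Module.finrank (ZMod p) G : ℝ)
      ≤ (d + 1) * (Module.finrank (ZMod p) W : ℝ) + 2 * d := by exact_mod_cast hrank
  have heq : (Module.finrank (ZMod p) G : ℝ) / (d + 1) - 2 * d / (d + 1)
      = ((Module.finrank (ZMod p) G : ℝ) - 2 * d) / (d + 1) := by ring
  rw [heq, div_le_iff₀ hd]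
  linarith
end

section
/- Let G be a finite-dimensional vector space over a finite field F of odd prime order, let M₁,…,M_d : G → G* be self-adjoint linear maps, and let r ≥ 0. Then there exists a linear subspace H of G of codimension at most rd, an integer 0 ≤ d' ≤ d, and self-adjoint linear maps M'₁,…,M'_{d'} : H → H* such that rank(a₁M'₁ + … + a_{d'}M'_{d'}) > r whenever (a₁,…,a_{d'}) ∈ F^{d'} ∖ {0}, and such that for each i, the restriction of Mᵢ to H (viewed as a map H → H*) lies in the F-linear span of M'₁,…,M'_{d'}. -/
open scoped BigOperators
open LinearMap Module

section Transfer

variable {F : Type*} [Field F] {G G₂ : Type*} [AddCommGroup G] [Module F G]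
  [AddCommGroup G₂] [Module F G₂]

/-- Transport a bilinear form along a linear equivalence. -/
noncomputable def rlTransfer (e : G ≃ₗ[F] G₂) (B : G →ₗ[F] Module.Dual F G) :
    G₂ →ₗ[F] Module.Dual F G₂ :=
  B.compl₁₂ e.symm.toLinearMap e.symm.toLinearMap

lemma rlTransfer_apply (e : G ≃ₗ[F] G₂) (B : G →ₗ[F] Module.Dual F G) (x y : G₂) :
    rlTransfer e B x y = B (e.symm x) (e.symm y) := rfl

lemma rlTransfer_sum_smul (e : G ≃ₗ[F] G₂) {d : ℕ} (a : Fin d → F)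
    (B : Fin d → (G →ₗ[F] Module.Dual F G)) :
    (∑ j, a j • rlTransfer e (B j)) = rlTransfer e (∑ j, a j • B j) := by
  ext x y
  simp [rlTransfer_apply, LinearMap.sum_apply, LinearMap.smul_apply]

lemma ker_rlTransfer (e : G ≃ₗ[F] G₂) (B : G →ₗ[F] Module.Dual F G) :
    LinearMap.ker (rlTransfer e B) = (LinearMap.ker B).map (e : G →ₗ[F] G₂) := by
  ext x
  rw [LinearMap.mem_ker, Submodule.mem_map_equiv, LinearMap.mem_ker]
  constructor
  · intro h
    ext z
    have : rlTransfer e B x (e z) = 0 := by rw [h]; rfl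
    simpa [rlTransfer_apply] using this
  · intro h
    ext y
    simp [rlTransfer_apply, h]

lemma finrank_ker_rlTransfer [FiniteDimensional F G] (e : G ≃ₗ[F] G₂)
    (B : G →ₗ[F] Module.Dual F G) :
    Module.finrank F (LinearMap.ker (rlTransfer e B)) =
      Module.finrank F (LinearMap.ker B) := by
  rw [ker_rlTransfer]
  exact LinearEquiv.finrank_map_eq e _

end Transfer

universe u

set_option maxHeartbeats 1000000 in
theorem rank_lemma_aux (p : ℕ) [Fact p.Prime] (r : ℕ) :
    ∀ (d : ℕ) (G : Type u) [AddCommGroup G] [Module (ZMod p) G]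
      [FiniteDimensional (ZMod p) G]
      (M : Fin d → G →ₗ[ZMod p] Module.Dual (ZMod p) G),
      (∀ j (x y : G), M j x y = M j y x) →
    ∃ (H : Submodule (ZMod p) G) (d' : ℕ)
      (M' : Fin d' → (H →ₗ[ZMod p] Module.Dual (ZMod p) H)),
      d' ≤ d ∧
      Module.finrank (ZMod p) G ≤ Module.finrank (ZMod p) H + r * d ∧
      (∀ j (x y : H), M' j x y = M' j y x) ∧
      (∀ a : Fin d' → ZMod p, a ≠ 0 →
        Module.finrank (ZMod p) (LinearMap.ker (∑ j, a j • M' j)) + r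
          < Module.finrank (ZMod p) H) ∧
      (∀ i, ∃ c : Fin d' → ZMod p, ∀ x y : H,
        M i (x : G) (y : G) = ∑ j, c j * M' j x y) := by
  intro d
  induction d with
  | zero =>
    intro G _ _ _ M hself
    refine ⟨⊤, 0, Fin.elim0, le_rfl, ?_, ?_, ?_, ?_⟩
    · simp
    · exact fun j => j.elim0
    · intro a ha
      exact absurd (Subsingleton.elim a 0) ha
    · exact fun i => i.elim0
  | succ n ih =>
    intro G _ _ _ M hself
    by_cases hc : ∀ a : Fin (n+1) → ZMod p, a ≠ 0 →
        Module.finrank (ZMod p) (LinearMap.ker (∑ j, a j • M j)) + r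
          < Module.finrank (ZMod p) G
    · -- all nonzero combinations already have large rank: take H = ⊤
      refine ⟨⊤, n + 1, fun j => rlTransfer (Submodule.topEquiv (R := ZMod p) (M := G)).symm (M j),
        le_rfl, ?_, ?_, ?_, ?_⟩
      · rw [finrank_top]; exact Nat.le_add_right _ _
      · intro j x y
        simp only [rlTransfer_apply]
        exact hself j _ _
      · intro a ha
        rw [rlTransfer_sum_smul, finrank_ker_rlTransfer, finrank_top]
        exact hc a ha
      · intro i
        refine ⟨Pi.single i 1, fun x y => ?_⟩
        simp [rlTransfer_apply, Pi.single_apply]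
    · push_neg at hc
      obtain ⟨a, ha, hrank⟩ := hc
      obtain ⟨j₀, hj₀⟩ : ∃ j, a j ≠ 0 := by
        by_contra h
        push_neg at h
        exact ha (funext h)
      obtain ⟨N, hN⟩ : ∃ N', N' = ∑ j, a j • M j := ⟨_, rfl⟩
      rw [← hN] at hrank
      obtain ⟨M₂, hM₂app⟩ : ∃ M₂ : Fin n →
          ((LinearMap.ker N) →ₗ[ZMod p] Module.Dual (ZMod p) (LinearMap.ker N)),
          ∀ (i : Fin n) (x y : LinearMap.ker N),
            M₂ i x y = M (j₀.succAbove i) (x : G) (y : G) :=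
        ⟨fun i => (M (j₀.succAbove i)).compl₁₂ (LinearMap.ker N).subtype
          (LinearMap.ker N).subtype, fun i x y => rfl⟩
      have hKzero : ∀ (x y : LinearMap.ker N), ∑ j, a j * M j (x : G) (y : G) = 0 := by
        intro x y
        have e1 : (∑ j, a j • M j) (x : G) = N (x : G) := DFunLike.congr_fun hN.symm _
        have e2 : (∑ j, a j • M j) (x : G) (y : G) = 0 := by
          rw [e1, LinearMap.mem_ker.mp x.2, LinearMap.zero_apply]
        rw [← e2]
        simp [LinearMap.sum_apply, LinearMap.smul_apply, smul_eq_mul]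
      -- every M i restricted to ker N is a combination of the M₂'s
      have hbase : ∀ i : Fin (n+1), ∃ b : Fin n → ZMod p, ∀ (x y : LinearMap.ker N),
          M i (x : G) (y : G) = ∑ i', b i' * M₂ i' x y := by
        intro i
        rcases eq_or_ne i j₀ with rfl | hne
        · refine ⟨fun i' => -(a i)⁻¹ * a (i.succAbove i'), fun x y => ?_⟩
          have h0 := hKzero x y
          rw [Fin.sum_univ_succAbove (fun j => a j * M j (x : G) (y : G)) i] at h0
          have h1 : a i * M i (x : G) (y : G)
              = -∑ i', a (i.succAbove i') * M (i.succAbove i') (x : G) (y : G) :=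
            eq_neg_of_add_eq_zero_left h0
          have h2 : M i (x : G) (y : G) = (a i)⁻¹ * (a i * M i (x : G) (y : G)) := by
            rw [← mul_assoc, inv_mul_cancel₀ hj₀, one_mul]
          rw [h2, h1, mul_neg, ← neg_mul, Finset.mul_sum]
          refine Finset.sum_congr rfl fun i' _ => ?_
          rw [hM₂app]
          ring
        · obtain ⟨i', rfl⟩ := Fin.exists_succAbove_eq hne
          refine ⟨Pi.single i' 1, fun x y => ?_⟩
          simp [Pi.single_apply, hM₂app]
      obtain ⟨H, d', M', hd', hfin, hsa, hrk, hspan⟩ :=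
        ih (LinearMap.ker N) M₂ (fun j x y => by rw [hM₂app, hM₂app]; exact hself _ _ _)
      choose C hC using hspan
      obtain ⟨e, hcoe⟩ : ∃ e : H ≃ₗ[ZMod p] (H.map (LinearMap.ker N).subtype),
          ∀ z : H, ((e z : H.map (LinearMap.ker N).subtype) : G) = ((z : LinearMap.ker N) : G) :=
        ⟨Submodule.equivMapOfInjective (LinearMap.ker N).subtype
          (LinearMap.ker N).injective_subtype H, fun z => rfl⟩
      have hfinmap : Module.finrank (ZMod p) (H.map (LinearMap.ker N).subtype)
          = Module.finrank (ZMod p) H := (LinearEquiv.finrank_eq e).symm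
      refine ⟨H.map (LinearMap.ker N).subtype, d', fun j => rlTransfer e (M' j),
        hd'.trans (Nat.le_succ n), ?_, ?_, ?_, ?_⟩
      · rw [hfinmap, Nat.mul_succ]
        omega
      · intro j x y
        simp only [rlTransfer_apply]
        exact hsa j _ _
      · intro a' ha'
        rw [rlTransfer_sum_smul, finrank_ker_rlTransfer, hfinmap]
        exact hrk a' ha'
      · intro i
        obtain ⟨b, hb⟩ := hbase i
        refine ⟨fun j => ∑ i', b i' * C i' j, fun x y => ?_⟩
        have hx : ((x : G)) = (((e.symm x : H) : LinearMap.ker N) : G) := by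
          conv_lhs => rw [← e.apply_symm_apply x]
          exact hcoe (e.symm x)
        have hy : ((y : G)) = (((e.symm y : H) : LinearMap.ker N) : G) := by
          conv_lhs => rw [← e.apply_symm_apply y]
          exact hcoe (e.symm y)
        have hMt : ∀ j, rlTransfer e (M' j) x y = M' j (e.symm x) (e.symm y) :=
          fun j => rfl
        rw [hx, hy]
        calc M i ((e.symm x : H) : LinearMap.ker N) ((e.symm y : H) : LinearMap.ker N)
            = ∑ i', b i' * M₂ i' ((e.symm x : H) : LinearMap.ker N)
                ((e.symm y : H) : LinearMap.ker N) := hb _ _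
          _ = ∑ i', b i' * ∑ j, C i' j * M' j (e.symm x) (e.symm y) := by
              refine Finset.sum_congr rfl fun i' _ => ?_
              rw [hC i' (e.symm x) (e.symm y)]
          _ = ∑ i', ∑ j, b i' * C i' j * M' j (e.symm x) (e.symm y) := by
              refine Finset.sum_congr rfl fun i' _ => ?_
              rw [Finset.mul_sum]
              exact Finset.sum_congr rfl fun j _ => by ring
          _ = ∑ j, ∑ i', b i' * C i' j * M' j (e.symm x) (e.symm y) := Finset.sum_comm
          _ = ∑ j, (∑ i', b i' * C i' j) * rlTransfer e (M' j) x y := by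
              refine Finset.sum_congr rfl fun j _ => ?_
              rw [hMt, Finset.sum_mul]

/-- The rank lemma: after passing to a subspace `H` of codimension at most `r*d`,
the given self-adjoint maps restrict to the span of linearly independent
self-adjoint maps, every nonzero combination of which has rank greater than `r`. -/
theorem rank_lemma {p : ℕ} [Fact p.Prime] (hodd : Odd p)
    (G : Type*) [AddCommGroup G] [Module (ZMod p) G] [FiniteDimensional (ZMod p) G]
    (d : ℕ) (M : Fin d → G →ₗ[ZMod p] Module.Dual (ZMod p) G)
    (hself : ∀ j (x y : G), M j x y = M j y x) (r : ℕ) :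
    ∃ (H : Submodule (ZMod p) G) (d' : ℕ)
      (M' : Fin d' → (H →ₗ[ZMod p] Module.Dual (ZMod p) H)),
      d' ≤ d ∧
      Module.finrank (ZMod p) G ≤ Module.finrank (ZMod p) H + r * d ∧
      (∀ j (x y : H), M' j x y = M' j y x) ∧
      (∀ a : Fin d' → ZMod p, a ≠ 0 →
        Module.finrank (ZMod p) (LinearMap.ker (∑ j, a j • M' j)) + r
          < Module.finrank (ZMod p) H) ∧
      (∀ i, ∃ c : Fin d' → ZMod p, ∀ x y : H,
        M i (x : G) (y : G) = ∑ j, c j * M' j x y) := by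
  exact rank_lemma_aux p r d G M hself
end

section
/- Let F be a finite field of odd prime order, W a finite-dimensional F-vector space, and φ : W → ℝ/ℤ a quadratic phase function (satisfying the third-order difference identity). Then φ takes at most |F| values; in fact, after subtracting the constant φ(0), all values of φ − φ(0) lie in the subgroup T_F := {x ∈ ℝ/ℤ : |F|·x = 0}. -/
open scoped BigOperators

/-- A quadratic phase function on a vector space over `𝔽_p` takes at most `p` values:
after subtracting `φ 0`, all values lie in the `p`-torsion of `ℝ/ℤ`. -/
theorem quadratic_phase_values {p : ℕ} (hp : p.Prime) (hodd : Odd p)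
    (W : Type*) [AddCommGroup W] [Module (ZMod p) W]
    (φ : W → AddCircle (1 : ℝ))
    (hquad : ∀ x h₁ h₂ h₃ : W,
      φ (x + h₁ + h₂ + h₃) - φ (x + h₁ + h₂) - φ (x + h₂ + h₃) - φ (x + h₁ + h₃)
        + φ (x + h₁) + φ (x + h₂) + φ (x + h₃) - φ x = 0) :
    (∀ x : W, p • (φ x - φ 0) = 0) ∧
    (Set.range φ).Finite ∧ Nat.card (Set.range φ) ≤ p := by
  have hp0 : 0 < p := hp.pos
  set ψ : W → AddCircle (1 : ℝ) := fun x => φ x - φ 0 with hψdef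
  set B : W → W → AddCircle (1 : ℝ) := fun a b => ψ (a + b) - ψ a - ψ b with hBdef
  have hψ0 : ψ 0 = 0 := by simp [hψdef]
  have hB0 : ∀ b, B 0 b = 0 := by intro b; simp [hBdef, hψ0]
  have hBadd : ∀ a a' b : W, B (a + a') b = B a b + B a' b := by
    intro a a' b
    have h := hquad 0 a a' b
    simp only [zero_add] at h
    rw [← sub_eq_zero]
    calc B (a + a') b - (B a b + B a' b)
        = φ (a + a' + b) - φ (a + a') - φ (a' + b) - φ (a + b)
            + φ a + φ a' + φ b - φ 0 := by simp only [hBdef, hψdef]; abel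
      _ = 0 := h
  have hpk : ∀ k : W, p • k = 0 := by
    intro k
    rw [← Nat.cast_smul_eq_nsmul (ZMod p), ZMod.natCast_self, zero_smul]
  have hBn : ∀ (n : ℕ) (a b : W), B (n • a) b = n • B a b := by
    intro n a b
    induction n with
    | zero => simp [hB0]
    | succ n ih => rw [succ_nsmul, hBadd, ih, succ_nsmul]
  have hBtor : ∀ a b : W, p • B a b = 0 := by
    intro a b
    rw [← hBn, hpk, hB0]
  have hψadd : ∀ a b : W, ψ (a + b) = ψ a + ψ b + B a b := by
    intro a b; simp only [hBdef]; abel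
  have hpow : ∀ (n : ℕ) (k : W), ψ (n • k) = n • ψ k + (n.choose 2) • B k k := by
    intro n k
    induction n with
    | zero => simp [hψ0]
    | succ n ih =>
      rw [succ_nsmul, hψadd, ih, hBn, Nat.choose_succ_succ, Nat.choose_one_right,
        succ_nsmul, add_smul]
      abel
  obtain ⟨m, hm⟩ : ∃ m, p - 1 = 2 * m := by
    obtain ⟨t, ht⟩ := hodd; exact ⟨t, by omega⟩
  have hchoose : p.choose 2 = m * p := by
    rw [Nat.choose_two_right, hm]
    rw [show p * (2 * m) = m * p * 2 by ring, Nat.mul_div_cancel _ (by norm_num)]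
  have key : ∀ x : W, p • ψ x = 0 := by
    intro k
    have h := hpow p k
    rw [hpk k, hψ0, hchoose, mul_smul, hBtor, smul_zero, add_zero] at h
    exact h.symm
  refine ⟨key, ?_⟩
  -- torsion points lie in the range of an explicit finite map
  have hsub : Set.range φ ⊆ Set.range (fun k : Fin p => φ 0 + (((k : ℝ) / p : ℝ) : AddCircle (1 : ℝ))) := by
    rintro _ ⟨x, rfl⟩
    obtain ⟨r, hr⟩ : ∃ r : ℝ, (r : AddCircle (1 : ℝ)) = ψ x := Quotient.exists_rep _
    have h1 : ((p • r : ℝ) : AddCircle (1 : ℝ)) = 0 := by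
      rw [AddCircle.coe_nsmul, hr, key]
    obtain ⟨n, hn⟩ := (AddCircle.coe_eq_zero_iff _).mp h1
    simp only [smul_eq_mul, mul_one, nsmul_eq_mul] at hn
    set s : ℤ := n % p with hs
    have hs0 : 0 ≤ s := Int.emod_nonneg n (by exact_mod_cast hp0.ne')
    have hsp : s < p := Int.emod_lt_of_pos n (by exact_mod_cast hp0)
    refine ⟨⟨s.toNat, by omega⟩, ?_⟩
    show φ 0 + ((((⟨s.toNat, by omega⟩ : Fin p) : ℕ) : ℝ) / p : ℝ) = φ x
    have hval : (((⟨s.toNat, by omega⟩ : Fin p) : ℕ) : ℝ) = (s : ℝ) := by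
      show ((s.toNat : ℕ) : ℝ) = (s : ℝ)
      exact_mod_cast Int.toNat_of_nonneg hs0
    rw [hval]
    have hpr : (p : ℝ) ≠ 0 := by exact_mod_cast hp0.ne'
    have hrn : (p : ℝ) * r = (n : ℝ) := by rw [← hn, zsmul_eq_mul, mul_one]
    have hkey : ((((s : ℝ) / p) : ℝ) : AddCircle (1 : ℝ)) = ψ x := by
      rw [← hr, ← sub_eq_zero, ← AddCircle.coe_sub, AddCircle.coe_eq_zero_iff]
      refine ⟨-(n / p), ?_⟩
      have hq : (s : ℝ) = (n : ℝ) - (p : ℝ) * ((n / p : ℤ) : ℝ) := by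
        have h2 : s = n - p * (n / p) := by rw [hs, Int.emod_def]
        rw [h2]; push_cast; ring
      have hr2 : r = (n : ℝ) / p := by
        rw [eq_div_iff hpr]; linarith [hrn]
      rw [hq, hr2]
      push_cast
      field_simp
      ring
    rw [hkey]
    simp [hψdef]
  constructor
  · exact Set.Finite.subset (Set.finite_range _) hsub
  · calc Nat.card (Set.range φ) ≤ Nat.card (Set.range (fun k : Fin p => φ 0 + (((k : ℝ) / p : ℝ) : AddCircle (1 : ℝ)))) := by
          rw [Nat.card_coe_set_eq, Nat.card_coe_set_eq]
          exact Set.ncard_le_ncard hsub (Set.finite_range _)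
      _ ≤ Nat.card (Fin p) := by
          rw [Nat.card_coe_set_eq, ← Set.image_univ]
          have := Set.ncard_image_le (f := fun k : Fin p => φ 0 + (((k : ℝ) / p : ℝ) : AddCircle (1 : ℝ))) (s := (Set.univ : Set (Fin p))) Set.finite_univ
          simpa [Set.ncard_univ] using this
      _ = p := by simp
end

section
/- Let F be a finite field of odd prime order and W a finite-dimensional F-vector space. Every quadratic phase function φ : W → ℝ/ℤ admits a Taylor expansion: there exist a unique map ∇φ : W → W* (the gradient) and a unique self-adjoint linear map ∇²φ : W → W* (the Hessian) such that φ(x+h) = φ(x) + ∇φ(x)·h + (1/2)∇²φ h · h for all x, h ∈ W, where ∇²φ h₁ · h₂ = φ(x+h₁+h₂) − φ(x+h₁) − φ(x+h₂) + φ(x) (independent of x) and ∇φ(x)·h = (1/2)(φ(x+h) − φ(x−h)). -/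
open scoped BigOperators

private lemma aux_torsion {M : Type*} [AddCommGroup M] {p : ℕ} (hodd : Odd p) {e : M}
    (h2 : 2 • e = 0) (hp : p • e = 0) : e = 0 := by
  obtain ⟨k, hk⟩ := hodd
  have h1 : p • e = e := by
    rw [hk, add_nsmul, one_nsmul, mul_comm, mul_smul, h2, smul_zero, zero_add]
  rw [← h1]; exact hp

/-- Taylor expansion of a quadratic phase function: there is a unique pair
`(∇φ, ∇²φ)` of torsion-valued maps, with `∇²φ` symmetric and biadditive and
`∇φ x` additive, satisfying the defining formulae
`∇²φ h₁·h₂ = φ(x+h₁+h₂) − φ(x+h₁) − φ(x+h₂) + φ(x)` (independently of `x`),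
`2∇φ(x)·h = φ(x+h) − φ(x−h)`, and the (doubled, since values are `p`-torsion
and `p` is odd) Taylor expansion `2φ(x+h) = 2φ(x) + 2∇φ(x)·h + ∇²φ h·h`. -/
theorem quadratic_phase_taylor {p : ℕ} (hp : p.Prime) (hodd : Odd p)
    (W : Type*) [AddCommGroup W] [Module (ZMod p) W]
    (φ : W → AddCircle (1 : ℝ))
    (hquad : ∀ x h₁ h₂ h₃ : W,
      φ (x + h₁ + h₂ + h₃) - φ (x + h₁ + h₂) - φ (x + h₂ + h₃) - φ (x + h₁ + h₃)
        + φ (x + h₁) + φ (x + h₂) + φ (x + h₃) - φ x = 0) :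
    ∃! gB : (W → W → AddCircle (1 : ℝ)) × (W → W → AddCircle (1 : ℝ)),
      (∀ x h₁ h₂ : W, gB.2 h₁ h₂
        = φ (x + h₁ + h₂) - φ (x + h₁) - φ (x + h₂) + φ x) ∧
      (∀ x h : W, 2 • gB.1 x h = φ (x + h) - φ (x - h)) ∧
      (∀ x h : W, 2 • φ (x + h) = 2 • φ x + 2 • gB.1 x h + gB.2 h h) ∧
      (∀ h₁ h₂ : W, gB.2 h₁ h₂ = gB.2 h₂ h₁) ∧
      (∀ h₁ h₂ h₃ : W, gB.2 (h₁ + h₂) h₃ = gB.2 h₁ h₃ + gB.2 h₂ h₃) ∧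
      (∀ x h₁ h₂ : W, gB.1 x (h₁ + h₂) = gB.1 x h₁ + gB.1 x h₂) ∧
      (∀ x h : W, p • gB.1 x h = 0) ∧
      (∀ h₁ h₂ : W, p • gB.2 h₁ h₂ = 0) := by
  obtain ⟨k, hk⟩ := id hodd
  -- shift invariance of the second difference
  have hsh : ∀ x h₁ h₂ : W, φ (x + h₁ + h₂) - φ (x + h₁) - φ (x + h₂) + φ x
      = φ (h₁ + h₂) - φ h₁ - φ h₂ + φ 0 := by
    intro x h₁ h₂
    have H := hquad 0 h₁ h₂ x
    simp only [zero_add] at H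
    rw [show h₁ + h₂ + x = x + h₁ + h₂ from by abel,
        show h₂ + x = x + h₂ from add_comm _ _,
        show h₁ + x = x + h₁ from add_comm _ _] at H
    rw [← sub_eq_zero, ← H]
    abel
  -- p-torsion of W
  have hph : ∀ h : W, p • h = (0 : W) := by
    intro h
    rw [← Nat.cast_smul_eq_nsmul (ZMod p) p h, ZMod.natCast_self, zero_smul]
  -- additivity of B in the first variable
  have hBadd : ∀ u v b : W, φ (u + v + b) - φ (u + v) - φ b + φ 0
      = (φ (u + b) - φ u - φ b + φ 0) + (φ (v + b) - φ v - φ b + φ 0) := by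
    intro u v b
    have H := hsh v u b
    rw [show v + u + b = u + v + b from by abel, add_comm v u] at H
    rw [← H]; abel
  have hBnsmul : ∀ (n : ℕ) (a b : W), φ (n • a + b) - φ (n • a) - φ b + φ 0
      = n • (φ (a + b) - φ a - φ b + φ 0) := by
    intro n a b
    induction n with
    | zero => rw [zero_nsmul, zero_nsmul, zero_add]; abel
    | succ n ih =>
      rw [succ_nsmul, hBadd (n • a) a b, ih, succ_nsmul]
  have hpB : ∀ h₁ h₂ : W, p • (φ (h₁ + h₂) - φ h₁ - φ h₂ + φ 0) = 0 := by
    intro h₁ h₂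
    rw [← hBnsmul p h₁ h₂, hph h₁, zero_add]
    abel
  -- discrete Taylor formula along multiples of h
  have hE : ∀ (x h : W) (n : ℕ), φ (x + n • h) - φ x
      = n • (φ (x + h) - φ x) + (n.choose 2) • (φ (h + h) - φ h - φ h + φ 0) := by
    intro x h n
    induction n with
    | zero => simp
    | succ n ih =>
      have H := hsh x (n • h) h
      rw [hBnsmul n h h] at H
      have Hφ : φ (x + n • h + h)
          = φ (x + n • h) + (φ (x + h) - φ x) + n • (φ (h + h) - φ h - φ h + φ 0) := by
        rw [← H]; abel
      have ihφ : φ (x + n • h)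
          = φ x + (n • (φ (x + h) - φ x) + (n.choose 2) • (φ (h + h) - φ h - φ h + φ 0)) := by
        rw [← ih]; abel
      rw [succ_nsmul, ← add_assoc, Hφ, ihφ, Nat.choose_succ_succ, Nat.choose_one_right,
          succ_nsmul, add_nsmul]
      abel
  -- p-torsion of the increments
  have hpE : ∀ x h : W, p • (φ (x + h) - φ x) = 0 := by
    intro x h
    have T := hE x h p
    have hc : p.choose 2 = k * p := by
      rw [Nat.choose_two_right, hk]
      have h1 : 2 * k + 1 - 1 = 2 * k := by omega
      rw [h1]
      have h2 : (2 * k + 1) * (2 * k) = k * (2 * k + 1) * 2 := by ring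
      rw [h2]
      exact Nat.mul_div_cancel _ (by norm_num)
    rw [hph h, add_zero, sub_self, hc, mul_smul, hpB h h, smul_zero, add_zero] at T
    exact T.symm
  have hpd : ∀ x h : W, p • (φ (x + h) - φ (x - h)) = 0 := by
    intro x h
    have h1 := hpE x h
    have h2 := hpE x (-h)
    rw [← sub_eq_add_neg] at h2
    have : φ (x + h) - φ (x - h) = (φ (x + h) - φ x) - (φ (x - h) - φ x) := by abel
    rw [this, smul_sub, h1, h2, sub_self]
  -- the doubled gradient identity
  have hg2 : ∀ x h : W, 2 • ((k + 1) • (φ (x + h) - φ (x - h))) = φ (x + h) - φ (x - h) := by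
    intro x h
    rw [smul_smul]
    have h2 : 2 * (k + 1) = p + 1 := by omega
    rw [h2, succ_nsmul, hpd x h, zero_add]
  have hgp : ∀ x h : W, p • ((k + 1) • (φ (x + h) - φ (x - h))) = 0 := by
    intro x h
    rw [smul_comm, hpd x h, smul_zero]
  refine ⟨⟨fun x h => (k + 1) • (φ (x + h) - φ (x - h)),
      fun h₁ h₂ => φ (h₁ + h₂) - φ h₁ - φ h₂ + φ 0⟩,
      ⟨?_, ?_, ?_, ?_, ?_, ?_, ?_, ?_⟩, ?_⟩
  · exact fun x h₁ h₂ => (hsh x h₁ h₂).symm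
  · exact hg2
  · intro x h
    dsimp only
    rw [hg2 x h]
    have H := hsh (x - h) h h
    rw [show x - h + h + h = x + h from by abel] at H
    rw [show x - h + h = x from by abel] at H
    rw [← H]
    abel
  · intro h₁ h₂
    dsimp only
    rw [add_comm h₁ h₂]
    abel
  · exact fun h₁ h₂ h₃ => hBadd h₁ h₂ h₃
  · intro x h₁ h₂
    dsimp only
    have H1 := hsh x h₁ h₂
    have H2 := hsh x (-h₁) (-h₂)
    rw [show x + -h₁ + -h₂ = x - (h₁ + h₂) from by abel,
        show x + -h₁ = x - h₁ from by abel,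
        show x + -h₂ = x - h₂ from by abel] at H2
    have hneg : φ (-h₁ + -h₂) - φ (-h₁) - φ (-h₂) + φ 0
        = φ (h₁ + h₂) - φ h₁ - φ h₂ + φ 0 := by
      have H := hsh (h₁ + h₂) (-h₁) (-h₂)
      rw [show h₁ + h₂ + -h₁ + -h₂ = (0 : W) from by abel,
          show h₁ + h₂ + -h₁ = h₂ from by abel,
          show h₁ + h₂ + -h₂ = h₁ from by abel] at H
      rw [← H]; abel
    rw [hneg] at H2
    have hφ1 : φ (x + h₁ + h₂)
        = φ (x + h₁) + φ (x + h₂) - φ x + (φ (h₁ + h₂) - φ h₁ - φ h₂ + φ 0) := by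
      rw [← H1]; abel
    have hφ2 : φ (x - (h₁ + h₂))
        = φ (x - h₁) + φ (x - h₂) - φ x + (φ (h₁ + h₂) - φ h₁ - φ h₂ + φ 0) := by
      rw [← H2]; abel
    rw [show x + (h₁ + h₂) = x + h₁ + h₂ from (add_assoc x h₁ h₂).symm, hφ1, hφ2,
        ← smul_add]
    congr 1
    abel
  · exact hgp
  · exact hpB
  · rintro ⟨g', B'⟩ ⟨u1, u2, _, _, _, _, u7, _⟩
    have hB : B' = fun h₁ h₂ => φ (h₁ + h₂) - φ h₁ - φ h₂ + φ 0 := by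
      funext a b
      have H := u1 0 a b
      simp only [zero_add] at H
      exact H
    have hg : g' = fun x h => (k + 1) • (φ (x + h) - φ (x - h)) := by
      funext x h
      have e2 : 2 • (g' x h - (k + 1) • (φ (x + h) - φ (x - h))) = 0 := by
        rw [smul_sub, u2 x h, hg2 x h, sub_self]
      have ep : p • (g' x h - (k + 1) • (φ (x + h) - φ (x - h))) = 0 := by
        rw [smul_sub, u7 x h, hgp x h, sub_self]
      have := aux_torsion hodd e2 ep
      exact sub_eq_zero.mp this
    rw [hg, hB]
end

section
/- Let G be a finite abelian group, f : G → ℝ≥0 a nonnegative function, and S ⊆ Ĝ a set of characters with orthogonal 'complement' subgroup S^⊥ := {x ∈ G : ξ·x = 0 for all ξ ∈ S}. Suppose 𝔼_{c∈G} |𝔼_{x∈c+S^⊥} f(x)|² ≥ |f̂(0)|² + ε for some ε > 0, where f̂(0) = 𝔼_G f. Then there exists c ∈ G such that 𝔼_{x∈c+S^⊥} f(x) ≥ f̂(0) + ε/f̂(0). -/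
open scoped BigOperators

/-- Energy concentration on cosets of `S^⊥` gives a density increment: if the
mean square of coset averages of a nonnegative `f` along cosets of
`S^⊥ = {x : ξ·x = 0 ∀ ξ ∈ S}` exceeds `(E f)² + ε`, then some coset average is
at least `E f + ε / (E f)`. -/
theorem coset_energy_density_increment {G : Type*} [AddCommGroup G] [Fintype G]
    (f : G → ℝ) (hf : ∀ x, 0 ≤ f x)
    (S : Set (G →+ AddCircle (1 : ℝ)))
    (P : G → Prop) [DecidablePred P]
    (hP : ∀ x, P x ↔ ∀ ξ ∈ S, ξ x = 0)
    (μ : ℝ) (hμ : μ = (∑ x : G, f x) / (Fintype.card G : ℝ)) (hμpos : 0 < μ)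
    (ε : ℝ) (hε : 0 < ε)
    (avg : G → ℝ)
    (havg : ∀ c : G, avg c
      = (∑ x ∈ Finset.univ.filter (fun x => P (x - c)), f x)
        / ((Finset.univ.filter (fun x : G => P (x - c))).card : ℝ))
    (henergy : μ ^ 2 + ε ≤ (∑ c : G, (avg c) ^ 2) / (Fintype.card G : ℝ)) :
    ∃ c : G, μ + ε / μ ≤ avg c := by
  classical
  set N : ℕ := Fintype.card G with hN
  have hNpos : (0 : ℝ) < N := by
    exact_mod_cast Fintype.card_pos
  set h : ℕ := (Finset.univ.filter (fun x : G => P x)).card with hh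
  have hP0 : P 0 := by
    rw [hP]; intro ξ _; exact map_zero ξ
  have hhpos : 0 < h := by
    apply Finset.card_pos.mpr
    exact ⟨0, Finset.mem_filter.mpr ⟨Finset.mem_univ _, hP0⟩⟩
  have hhR : (0 : ℝ) < h := by exact_mod_cast hhpos
  -- each coset has the same cardinality h
  have key1 : ∀ c : G, (Finset.univ.filter (fun x : G => P (x - c))).card = h := by
    intro c
    apply Finset.card_bij' (fun x _ => x - c) (fun y _ => y + c)
    · intro x hx
      simp only [Finset.mem_filter, Finset.mem_univ, true_and] at hx ⊢
      exact hx
    · intro y hy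
      simp only [Finset.mem_filter, Finset.mem_univ, true_and] at hy ⊢
      simpa using hy
    · intro x _; simp
    · intro y _; simp
  -- for fixed x, the number of c with P (x - c) is h
  have key1' : ∀ x : G, (Finset.univ.filter (fun c : G => P (x - c))).card = h := by
    intro x
    apply Finset.card_bij' (fun c _ => x - c) (fun y _ => x - y)
    · intro c hc
      simp only [Finset.mem_filter, Finset.mem_univ, true_and] at hc ⊢
      exact hc
    · intro y hy
      simp only [Finset.mem_filter, Finset.mem_univ, true_and] at hy ⊢
      simpa using hy
    · intro c _; simp
    · intro y _; simp
  have key2 : ∑ c : G, ∑ x ∈ Finset.univ.filter (fun x : G => P (x - c)), f x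
      = (h : ℝ) * ∑ x : G, f x := by
    have : ∀ c : G, ∑ x ∈ Finset.univ.filter (fun x : G => P (x - c)), f x
        = ∑ x : G, if P (x - c) then f x else 0 := by
      intro c; rw [Finset.sum_filter]
    simp_rw [this]
    rw [Finset.sum_comm]
    have : ∀ x : G, ∑ c : G, (if P (x - c) then f x else 0) = (h : ℝ) * f x := by
      intro x
      rw [← Finset.sum_filter, Finset.sum_const, nsmul_eq_mul, key1' x]
    simp_rw [this]
    rw [← Finset.mul_sum]
  have sum_avg : ∑ c : G, avg c = (N : ℝ) * μ := by
    have : ∀ c : G, avg c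
        = (∑ x ∈ Finset.univ.filter (fun x : G => P (x - c)), f x) / (h : ℝ) := by
      intro c; rw [havg c, key1 c]
    simp_rw [this]
    rw [← Finset.sum_div, key2, mul_div_assoc]
    rw [hμ]
    field_simp
  have avg_nonneg : ∀ c : G, 0 ≤ avg c := by
    intro c
    rw [havg c]
    apply div_nonneg
    · exact Finset.sum_nonneg fun x _ => hf x
    · positivity
  by_contra hcon
  push_neg at hcon
  set M : ℝ := μ + ε / μ with hM
  have hMpos : 0 < M := by positivity
  -- there is some c with avg c > 0
  have hex : ∃ c : G, 0 < avg c := by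
    by_contra hno
    push_neg at hno
    have : ∑ c : G, avg c ≤ 0 := Finset.sum_nonpos fun c _ => hno c
    rw [sum_avg] at this
    nlinarith
  obtain ⟨c₀, hc₀⟩ := hex
  have hlt : ∑ c : G, (avg c) ^ 2 < M * ((N : ℝ) * μ) := by
    have : ∑ c : G, (avg c) ^ 2 < ∑ c : G, M * avg c := by
      apply Finset.sum_lt_sum
      · intro c _
        have := avg_nonneg c
        have := le_of_lt (hcon c)
        nlinarith
      · refine ⟨c₀, Finset.mem_univ _, ?_⟩
        have := hcon c₀
        nlinarith
    calc ∑ c : G, (avg c) ^ 2 < ∑ c : G, M * avg c := this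
      _ = M * ∑ c : G, avg c := by rw [Finset.mul_sum]
      _ = M * ((N : ℝ) * μ) := by rw [sum_avg]
  have hge : (N : ℝ) * (μ ^ 2 + ε) ≤ ∑ c : G, (avg c) ^ 2 := by
    have := (le_div_iff₀ hNpos).mp henergy
    linarith
  have : M * ((N : ℝ) * μ) = (N : ℝ) * (μ ^ 2 + ε) := by
    rw [hM]
    field_simp
  linarith
end
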